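/- Let a > 0 and k ≥ 1, and consider the 2k+1 points {±a·e₁,…,±a·e_k, 0} in ℝ^k, where e₁,…,e_k is the standard basis. Then the Gaussian measure centered at a·e₁ of the Voronoi cell of a·e₁ equals γ_{a·e₁}(Vor(a·e₁)) = ∫_{a/2}^{+∞} (2π)^{−1/2} e^{−(b−a)²/2} (2Φ(b) − 1)^{k−1} db. -/

import Mathlib

open MeasureTheory Real
open scoped InnerProductSpace ENNReal

/-- The Voronoi cell of the point `w j` in the configuration `w`. -/
def Vor {n : ℕ} {ι : Type} (w : ι → EuclideanSpace ℝ (Fin n)) (j : ι) :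
    Set (EuclideanSpace ℝ (Fin n)) :=
  {x | ∀ i, ‖x - w j‖ ≤ ‖x - w i‖}

/-- The Gaussian probability measure on `ℝᵏ` centered at `w`,
with density `(2π)^{−k/2} e^{−‖x−w‖²/2}`. -/
noncomputable def gaussianAt {k : ℕ} (w : EuclideanSpace ℝ (Fin k)) :
    Measure (EuclideanSpace ℝ (Fin k)) :=
  volume.withDensity fun x =>
    ENNReal.ofReal ((2 * Real.pi) ^ (-(k : ℝ) / 2) * Real.exp (-‖x - w‖ ^ 2 / 2))

/-- The standard normal cumulative distribution function. -/
noncomputable def Phi (x : ℝ) : ℝ :=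
  ∫ t in Set.Iic x, (Real.sqrt (2 * Real.pi))⁻¹ * Real.exp (-t ^ 2 / 2)

/-- The configuration `{±a·e₁, …, ±a·e_k, 0}` of `2k+1` points in `ℝᵏ`. -/
noncomputable def steinerConfig (k : ℕ) (a : ℝ) :
    Option (Fin k × Bool) → EuclideanSpace ℝ (Fin k)
  | none => 0
  | some (i, b) => (if b then a else -a) • EuclideanSpace.single i 1

/-!
Comparing squared distances to `0` and to `±a·eᵢ` shows that the Voronoi cell of `a·e₁` is the
cone `{x | a/2 ≤ x₁, |xᵢ| ≤ x₁}`. The Gaussian centred at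
`a·e₁` is the product of `N(a, 1)` in the first coordinate and `N(0, 1)` in the others, so the
slice of the cone at `x₁ = b` is the cube `[-b, b]ᵏ⁻¹`, of measure `(2Φ(b) - 1)ᵏ⁻¹`; integrating
over `b ≥ a/2` against `N(a, 1)` gives the formula.
-/

open ProbabilityTheory Set

lemma gaussianPDFReal_one (μ t : ℝ) :
    gaussianPDFReal μ 1 t = (√(2 * π))⁻¹ * exp (-(t - μ) ^ 2 / 2) := by
  simp [gaussianPDFReal]

lemma Phi_eq_measureReal (x : ℝ) : Phi x = (gaussianReal 0 1).real (Iic x) := by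
  rw [measureReal_def, gaussianReal_apply_eq_integral 0 one_ne_zero,
    ENNReal.toReal_ofReal (setIntegral_nonneg measurableSet_Iic
      fun t _ => gaussianPDFReal_nonneg 0 1 t)]
  simp [Phi, gaussianPDFReal_one]

lemma measurable_Phi : Measurable Phi :=
  Monotone.measurable fun x y hxy => by
    simp only [Phi_eq_measureReal]; exact measureReal_mono (Iic_subset_Iic.2 hxy)

lemma abs_two_mul_Phi_sub_one_le (x : ℝ) : |2 * Phi x - 1| ≤ 1 := by
  have h0 : 0 ≤ Phi x := Phi_eq_measureReal x ▸ measureReal_nonneg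
  have h1 : Phi x ≤ 1 := Phi_eq_measureReal x ▸ measureReal_le_one
  rw [abs_le]; constructor <;> linarith

lemma measureReal_gaussianReal_Icc_neg_self {b : ℝ} (hb : 0 ≤ b) :
    (gaussianReal 0 1).real (Icc (-b) b) = 2 * Phi b - 1 := by
  have hsymm : (gaussianReal 0 1).real (Iio (-b)) = (gaussianReal 0 1).real (Ioi b) := by
    conv_rhs => rw [← neg_zero, ← gaussianReal_map_neg]
    rw [map_measureReal_apply measurable_neg measurableSet_Ioi]
    simp
  have hsub : Iio (-b) ⊆ Iic b := Iio_subset_Iic_self.trans (Iic_subset_Iic.2 (by linarith))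
  rw [← Iic_sdiff_Iio, measureReal_sdiff hsub measurableSet_Iio, hsymm, ← compl_Iic,
    probReal_compl_eq_one_sub measurableSet_Iic, ← Phi_eq_measureReal]
  ring

lemma withDensity_ofReal_prod_eq_pi {ι : Type*} [Fintype ι] {α : ι → Type*}
    [∀ i, MeasurableSpace (α i)] (μ : ∀ i, Measure (α i)) [∀ i, SigmaFinite (μ i)]
    {f : ∀ i, α i → ℝ} (hf : ∀ i, 0 ≤ f i) (hfi : ∀ i, Integrable (f i) (μ i)) :
    (Measure.pi μ).withDensity (fun x => ENNReal.ofReal (∏ i, f i (x i))) =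
      Measure.pi fun i => (μ i).withDensity fun t => ENNReal.ofReal (f i t) := by
  have := fun i => isFiniteMeasure_withDensity_ofReal (hfi i).2
  refine (Measure.pi_eq fun s hs => ?_).symm
  rw [withDensity_apply _ (MeasurableSet.univ_pi hs), Measure.restrict_pi_pi,
    ← ofReal_integral_eq_lintegral_ofReal (Integrable.fintype_prod_dep fun i => (hfi i).restrict)
      (ae_of_all _ fun x => Finset.prod_nonneg fun i _ => hf i _),
    integral_fintype_prod_eq_prod, ENNReal.ofReal_prod_of_nonneg
      fun i _ => integral_nonneg (hf i)]
  refine Finset.prod_congr rfl fun i _ => ?_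
  rw [withDensity_apply _ (hs i), ofReal_integral_eq_lintegral_ofReal (hfi i).restrict
    (ae_of_all _ (hf i))]

lemma rpow_neg_half_two_pi (k : ℕ) : (2 * π) ^ (-(k : ℝ) / 2) = (√(2 * π))⁻¹ ^ k := by
  rw [sqrt_eq_rpow, ← rpow_neg (by positivity), ← rpow_natCast, ← rpow_mul (by positivity)]
  ring_nf

lemma gaussianAt_density_toLp_eq_prod {k : ℕ} (w : EuclideanSpace ℝ (Fin k)) (y : Fin k → ℝ) :
    (2 * π) ^ (-(k : ℝ) / 2) * exp (-‖WithLp.toLp 2 y - w‖ ^ 2 / 2) =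
      ∏ i, gaussianPDFReal (w i) 1 (y i) := by
  simp_rw [gaussianPDFReal_one, Finset.prod_mul_distrib, Finset.prod_const, Finset.card_univ,
    Fintype.card_fin, ← exp_sum, rpow_neg_half_two_pi, EuclideanSpace.norm_sq_eq]
  congr 2
  simp [Finset.sum_div, ← Finset.sum_neg_distrib, neg_div]

lemma gaussianAt_eq_map_pi {k : ℕ} (w : EuclideanSpace ℝ (Fin k)) :
    gaussianAt w =
      (Measure.pi fun i => gaussianReal (w i) 1).map (MeasurableEquiv.toLp 2 (Fin k → ℝ)) := by
  ext s hs
  rw [gaussianAt, withDensity_apply _ hs, MeasurableEquiv.map_apply]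
  simp_rw [gaussianReal_of_var_ne_zero _ one_ne_zero, gaussianPDF_def]
  rw [← withDensity_ofReal_prod_eq_pi _ (fun i => gaussianPDFReal_nonneg _ _)
      fun i => integrable_gaussianPDFReal _ _, ← volume_pi,
    withDensity_apply _ ((MeasurableEquiv.toLp 2 (Fin k → ℝ)).measurable hs),
    ← (PiLp.volume_preserving_toLp (Fin k)).setLIntegral_comp_preimage_emb
      (MeasurableEquiv.toLp 2 (Fin k → ℝ)).measurableEmbedding]
  simp_rw [gaussianAt_density_toLp_eq_prod]
  rfl

lemma norm_sub_smul_single_sq {k : ℕ} (x : EuclideanSpace ℝ (Fin k)) (c : ℝ) (i : Fin k) :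
    ‖x - c • EuclideanSpace.single i (1 : ℝ)‖ ^ 2 = ‖x‖ ^ 2 - 2 * c * x i + c ^ 2 := by
  rw [norm_sub_sq_real, real_inner_smul_right, EuclideanSpace.inner_single_right, norm_smul,
    PiLp.norm_single]
  simp only [norm_one, mul_one, one_mul, Real.norm_eq_abs, sq_abs, conj_trivial]
  ring

lemma Vor_steinerConfig {k : ℕ} {a : ℝ} (ha : 0 < a) (j : Fin k) :
    Vor (steinerConfig k a) (some (j, true)) = {x | a / 2 ≤ x j ∧ ∀ i, |x i| ≤ x j} := by
  ext x
  simp only [Vor, mem_ofPred_eq, Option.forall, Prod.forall, Bool.forall_bool, steinerConfig,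
    ite_true, Bool.false_eq_true, ite_false, ← sq_le_sq₀ (norm_nonneg _) (norm_nonneg _),
    sub_zero, norm_sub_smul_single_sq, abs_le, forall_and]
  refine and_congr ?_ (and_congr (forall_congr' fun i => ?_) (forall_congr' fun i => ?_)) <;>
    constructor <;> intro h <;> nlinarith

lemma measurableSet_setOf_abs_le {ι : Type*} [Countable ι] {X : Type*} [MeasurableSpace X]
    {f : X → ℝ} {g : ι → X → ℝ} (hf : Measurable f) (hg : ∀ i, Measurable (g i)) (c : ℝ) :
    MeasurableSet {x | c ≤ f x ∧ ∀ i, |g i x| ≤ f x} := by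
  simp_rw [ofPred_and, ofPred_forall]
  exact (measurableSet_le measurable_const hf).inter
    (.iInter fun i => measurableSet_le (hg i).abs hf)

lemma pi_setOf_abs_le_eq_setLIntegral {n : ℕ} (μ : Fin (n + 1) → Measure ℝ)
    [∀ i, SigmaFinite (μ i)] (j : Fin (n + 1)) {c : ℝ} (hc : 0 ≤ c) :
    Measure.pi μ {y | c ≤ y j ∧ ∀ i, |y i| ≤ y j} =
      ∫⁻ b in Ici c, ∏ i, μ (j.succAbove i) (Icc (-b) b) ∂μ j := by
  set T : Set (ℝ × (Fin n → ℝ)) := {p | c ≤ p.1 ∧ ∀ i, |p.2 i| ≤ p.1}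
  have hpre : (MeasurableEquiv.piFinSuccAbove (fun _ => ℝ) j).symm ⁻¹'
      {y | c ≤ y j ∧ ∀ i, |y i| ≤ y j} = T := by
    ext ⟨b, z⟩
    simp only [MeasurableEquiv.piFinSuccAbove_symm_apply, j.forall_iff_succAbove,
      preimage_ofPred_eq, Fin.insertNthEquiv_apply, Fin.insertNth_apply_same,
      Fin.insertNth_apply_succAbove, mem_ofPred_eq, and_congr_right_iff, and_iff_right_iff_imp, T]
    exact fun hcb _ => (abs_of_nonneg (hc.trans hcb)).le
  have hslice (b : ℝ) : Prod.mk b ⁻¹' T = if c ≤ b then univ.pi fun _ => Icc (-b) b else ∅ := by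
    split_ifs with hb <;> ext z <;>
      simp only [T, mem_preimage, mem_ofPred_eq, hb, true_and, false_and, mem_pi, mem_univ,
        forall_const, mem_Icc, abs_le, mem_empty_iff_false]
  rw [← (measurePreserving_piFinSuccAbove μ j).symm.measure_preimage_equiv, hpre,
    Measure.prod_apply (measurableSet_setOf_abs_le measurable_fst
      (fun i => (measurable_pi_apply i).comp measurable_snd) c),
    ← lintegral_indicator measurableSet_Ici]
  refine lintegral_congr fun b => ?_
  by_cases hb : c ≤ b
  · rw [hslice, if_pos hb, indicator_of_mem (mem_Ici.2 hb), Measure.pi_pi]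
  · rw [hslice, if_neg hb, indicator_of_notMem (notMem_Ici.2 (not_le.1 hb)), measure_empty]

lemma gaussianAt_Vor_steinerConfig {n : ℕ} {a : ℝ} (ha : 0 < a) (j : Fin (n + 1)) :
    gaussianAt (steinerConfig (n + 1) a (some (j, true)))
        (Vor (steinerConfig (n + 1) a) (some (j, true))) =
      ∫⁻ b in Ici (a / 2), gaussianReal 0 1 (Icc (-b) b) ^ n ∂gaussianReal a 1 := by
  rw [Vor_steinerConfig ha, gaussianAt_eq_map_pi, MeasurableEquiv.map_apply,
    MeasurableEquiv.coe_toLp, preimage_ofPred_eq,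
    pi_setOf_abs_le_eq_setLIntegral _ j (by positivity)]
  simp [steinerConfig, Fin.succAbove_ne]

lemma setLIntegral_gaussianReal_Icc_pow (n : ℕ) (a : ℝ) {c : ℝ} (hc : 0 ≤ c) :
    ∫⁻ b in Ici c, gaussianReal 0 1 (Icc (-b) b) ^ n ∂gaussianReal a 1 =
      ENNReal.ofReal (∫ b in Ici c, gaussianPDFReal a 1 b * (2 * Phi b - 1) ^ n) := by
  have hPhi {b : ℝ} (hb : b ∈ Ici c) : 0 ≤ 2 * Phi b - 1 :=
    measureReal_gaussianReal_Icc_neg_self (hc.trans hb) ▸ measureReal_nonneg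
  have hint : Integrable (fun b => gaussianPDFReal a 1 b * (2 * Phi b - 1) ^ n) :=
    (integrable_gaussianPDFReal a 1).mul_bdd
      ((measurable_Phi.const_mul 2 |>.sub_const 1).pow_const n).aestronglyMeasurable
      (ae_of_all _ fun b => by
        rw [norm_pow, Real.norm_eq_abs]
        exact pow_le_one₀ (abs_nonneg _) (abs_two_mul_Phi_sub_one_le b))
  rw [ofReal_integral_eq_lintegral_ofReal hint.integrableOn
      ((ae_restrict_iff' measurableSet_Ici).2 (ae_of_all _ fun b hb =>
        mul_nonneg (gaussianPDFReal_nonneg a 1 b) (pow_nonneg (hPhi hb) n))),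
    gaussianReal_of_var_ne_zero a one_ne_zero, restrict_withDensity measurableSet_Ici,
    lintegral_withDensity_eq_lintegral_mul_non_measurable _ (measurable_gaussianPDF a 1)
      (ae_of_all _ fun _ => gaussianPDF_lt_top)]
  refine setLIntegral_congr_fun measurableSet_Ici fun b hb => ?_
  rw [Pi.mul_apply, gaussianPDF, ENNReal.ofReal_mul (gaussianPDFReal_nonneg a 1 b),
    ENNReal.ofReal_pow (hPhi hb), ← measureReal_gaussianReal_Icc_neg_self (hc.trans hb),
    ofReal_measureReal]

/-- For the configuration `{±a·e₁, …, ±a·e_k, 0}`, the Gaussian measure centered at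
`a·e₁` of the Voronoi cell of `a·e₁` equals
`∫_{a/2}^∞ (2π)^{−1/2} e^{−(b−a)²/2} (2Φ(b)−1)^{k−1} db`. -/
theorem stmt16 (k : ℕ) (hk : 1 ≤ k) (a : ℝ) (ha : 0 < a) :
    gaussianAt (steinerConfig k a (some (⟨0, by omega⟩, true)))
        (Vor (steinerConfig k a) (some (⟨0, by omega⟩, true))) =
      ENNReal.ofReal (∫ b in Set.Ioi (a / 2),
        (Real.sqrt (2 * Real.pi))⁻¹ * Real.exp (-(b - a) ^ 2 / 2) *
          (2 * Phi b - 1) ^ (k - 1)) := by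
  obtain ⟨n, rfl⟩ : ∃ n, k = n + 1 := ⟨k - 1, by omega⟩
  rw [gaussianAt_Vor_steinerConfig ha, setLIntegral_gaussianReal_Icc_pow n a (by positivity),
    integral_Ici_eq_integral_Ioi, Nat.add_sub_cancel]
  simp_rw [gaussianPDFReal_one]
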